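/- Strong duality holds for Inf_Q(P): there exist a primal feasible x* and a dual feasible y* such that x_0* = Σ_i (p_{i0}·y_{i0}* + ⟨p̄_i, ȳ_i*⟩), and moreover every primal feasible x and every dual feasible y satisfy x_0 ≤ Σ_i (p_{i0}·y_{i0} + ⟨p̄_i, ȳ_i⟩); consequently x* is optimal for Inf_Q(P) and y* is dual optimal, and the optimal values of the two problems coincide. -/

import Mathlib

/-- A point `x` is primal feasible for `Inf_Q(P)`. -/
def PrimalFeasible {d m : ℕ} (p : Fin m → ℝ × EuclideanSpace ℝ (Fin d))
    (x : ℝ × EuclideanSpace ℝ (Fin d)) : Prop :=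
  ∀ i, ‖(p i).2 - x.2‖ ≤ (p i).1 - x.1

/-- `y` is feasible for the dual problem (D). -/
def DualFeasible {d m : ℕ} (y : Fin m → ℝ × EuclideanSpace ℝ (Fin d)) : Prop :=
  (∑ i, (y i).1) = 1 ∧ (∑ i, (y i).2) = 0 ∧ ∀ i, ‖(y i).2‖ ≤ (y i).1

/-- The dual objective function of (D). -/
noncomputable def DualObj {d m : ℕ} (p y : Fin m → ℝ × EuclideanSpace ℝ (Fin d)) : ℝ :=
  ∑ i, ((p i).1 * (y i).1 + (inner ℝ (p i).2 (y i).2 : ℝ))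

/-!
A primal optimum `(v, z)` exists because `z ↦ minᵢ (pᵢ₀ - ‖p̄ᵢ - z‖)` is continuous and tends to
`-∞`. At `z` no direction `w` can strictly shorten all the active distances `‖p̄ᵢ - z‖`
(those with `‖p̄ᵢ - z‖ = pᵢ₀ - v`), since moving along it would raise `v`. By Gordan's
alternative, `0 = ∑ λᵢ uᵢ` is then a convex combination, over the active indices, of the
gradients `uᵢ` of `‖p̄ᵢ - ·‖` at `z` (`‖uᵢ‖ ≤ 1`), and `yᵢ = λᵢ (1, uᵢ)` is dual feasible with value
`∑ λᵢ (pᵢ₀ - ‖p̄ᵢ - z‖) = v`. Weak duality, i.e. self-duality of the Lorentz cone, makes both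
points optimal.
-/

open Filter Topology
open scoped RealInnerProductSpace

section Gordan

variable {ι E : Type*} [Fintype ι] [NormedAddCommGroup E] [InnerProductSpace ℝ E]
  [CompleteSpace E]

theorem exists_mem_stdSimplex_sum_smul_eq_zero (s : Set ι) (u : ι → E)
    (h : ¬ ∃ w, ∀ i ∈ s, ⟪u i, w⟫ < 0) :
    ∃ μ ∈ stdSimplex ℝ ι, (∀ i ∉ s, μ i = 0) ∧ ∑ i, μ i • u i = 0 := by
  classical
  set T := stdSimplex ℝ ι ∩ (Submodule.pi sᶜ (fun _ ↦ ⊥) : Submodule ℝ (ι → ℝ))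
  set K := Fintype.linearCombination ℝ u '' T
  have hK : IsCompact K :=
    ((isCompact_stdSimplex ℝ ι).inter_right (Submodule.closed_of_finiteDimensional _)).image
      (LinearMap.continuous_of_finiteDimensional _)
  have hKconv : Convex ℝ K :=
    ((convex_stdSimplex ℝ ι).inter (Submodule.convex _)).linear_image _
  by_contra! h0
  have h0K : (0 : E) ∉ K := by
    rintro ⟨μ, ⟨hμ, hμs⟩, hμ0⟩
    exact h0 μ hμ (fun i hi ↦ (Submodule.mem_pi.1 hμs) i hi)
      (by rwa [Fintype.linearCombination_apply] at hμ0)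
  obtain ⟨f, c, hf0, hfK⟩ := geometric_hahn_banach_point_closed hKconv hK.isClosed h0K
  refine h ⟨-(InnerProductSpace.toDual ℝ E).symm f, fun i hi ↦ ?_⟩
  have hsingle : Pi.single i 1 ∈ T := by
    refine ⟨single_mem_stdSimplex ℝ i, Submodule.mem_pi.2 fun j hj ↦ ?_⟩
    have : j ≠ i := fun hji ↦ hj (hji ▸ hi)
    simp [this]
  have := hfK _ ⟨_, hsingle, rfl⟩
  rw [Fintype.linearCombination_apply_single, one_smul] at this
  rw [map_zero] at hf0
  rw [inner_neg_right, real_inner_comm, InnerProductSpace.toDual_symm_apply]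
  linarith

end Gordan

section

variable {E : Type*} [NormedAddCommGroup E] [InnerProductSpace ℝ E]

theorem eventually_norm_sub_smul_lt_norm {v w : E} (h : 0 < ⟪v, w⟫) :
    ∀ᶠ t in 𝓝[>] (0 : ℝ), ‖v - t • w‖ < ‖v‖ := by
  have hsmall : ∀ᶠ t : ℝ in 𝓝 0, t * ‖w‖ ^ 2 < 2 * ⟪v, w⟫ :=
    (continuous_id.mul continuous_const).continuousAt.eventually_lt continuousAt_const
      (by simpa using h)
  filter_upwards [self_mem_nhdsWithin, nhdsWithin_le_nhds hsmall] with t (ht : 0 < t) hsmall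
  rw [← sq_lt_sq₀ (norm_nonneg _) (norm_nonneg _), norm_sub_sq_real, real_inner_smul_right,
    norm_smul, mul_pow, Real.norm_eq_abs, sq_abs]
  nlinarith

theorem real_inner_inv_norm_smul_self (v : E) : ⟪v, ‖v‖⁻¹ • v⟫ = ‖v‖ := by
  rcases eq_or_ne v 0 with rfl | hv
  · simp
  rw [real_inner_smul_right, real_inner_self_eq_norm_sq]
  field_simp [norm_ne_zero_iff.2 hv]

theorem norm_inv_norm_smul_le_one (v : E) : ‖‖v‖⁻¹ • v‖ ≤ 1 := by
  rcases eq_or_ne v 0 with rfl | hv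
  · simp
  exact (norm_smul_inv_norm hv).le

end

section Duality

variable {d m : ℕ} {p : Fin m → ℝ × EuclideanSpace ℝ (Fin d)}

theorem PrimalFeasible.le_dualObj {x : ℝ × EuclideanSpace ℝ (Fin d)} (hx : PrimalFeasible p x)
    {y : Fin m → ℝ × EuclideanSpace ℝ (Fin d)} (hy : DualFeasible y) : x.1 ≤ DualObj p y := by
  obtain ⟨hy₁, hy₂, hy₃⟩ := hy
  -- `p i - x` and `y i` both lie in the self-dual Lorentz cone
  have hterm : ∀ i, 0 ≤ ((p i).1 - x.1) * (y i).1 + ⟪(p i).2 - x.2, (y i).2⟫ := fun i ↦ by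
    have := neg_le_of_abs_le (abs_real_inner_le_norm ((p i).2 - x.2) (y i).2)
    nlinarith [mul_le_mul (hx i) (hy₃ i) (norm_nonneg _) ((norm_nonneg _).trans (hx i))]
  have hsum :
      ∑ i, (((p i).1 - x.1) * (y i).1 + ⟪(p i).2 - x.2, (y i).2⟫) = DualObj p y - x.1 := by
    simp only [sub_mul, inner_sub_left, DualObj, Finset.sum_add_distrib, Finset.sum_sub_distrib,
      ← Finset.mul_sum, ← inner_sum, hy₁, hy₂, inner_zero_right]
    ring
  rw [← sub_nonneg, ← hsum]
  exact Finset.sum_nonneg fun i _ ↦ hterm i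

theorem exists_primalFeasible_forall_le (hm : 1 ≤ m) (p : Fin m → ℝ × EuclideanSpace ℝ (Fin d)) :
    ∃ x, PrimalFeasible p x ∧ ∀ x', PrimalFeasible p x' → x'.1 ≤ x.1 := by
  have hne : (Finset.univ : Finset (Fin m)).Nonempty := ⟨⟨0, hm⟩, Finset.mem_univ _⟩
  set f : EuclideanSpace ℝ (Fin d) → ℝ :=
    fun z ↦ Finset.univ.inf' hne fun i ↦ (p i).1 - ‖(p i).2 - z‖
  have hf : Continuous f := Continuous.finset_inf'_apply hne fun i _ ↦ by fun_prop
  have hlim : Tendsto f (cocompact _) atBot := by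
    let i₀ : Fin m := ⟨0, hm⟩
    have hdist : Tendsto (fun z ↦ ‖(p i₀).2 - z‖) (cocompact _) atTop :=
      tendsto_norm_cocompact_atTop.comp
        (Homeomorph.subLeft (p i₀).2).isClosedEmbedding.tendsto_cocompact
    exact tendsto_atBot_mono (fun z ↦ Finset.inf'_le _ (Finset.mem_univ i₀))
      (tendsto_atBot_add_const_left _ _ (tendsto_neg_atTop_atBot.comp hdist))
  obtain ⟨z, hz⟩ := hf.exists_forall_ge hlim
  refine ⟨(f z, z), fun i ↦ ?_, fun x' hx' ↦ (Finset.le_inf' hne _ fun i _ ↦ ?_).trans (hz x'.2)⟩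
  · have := Finset.inf'_le (fun i ↦ (p i).1 - ‖(p i).2 - z‖) (Finset.mem_univ i)
    dsimp only; linarith
  · linarith [hx' i]

theorem PrimalFeasible.exists_lt {x : ℝ × EuclideanSpace ℝ (Fin d)} (hx : PrimalFeasible p x)
    {w : EuclideanSpace ℝ (Fin d)}
    (hw : ∀ i, ‖(p i).2 - x.2‖ = (p i).1 - x.1 → 0 < ⟪(p i).2 - x.2, w⟫) :
    ∃ x', PrimalFeasible p x' ∧ x.1 < x'.1 := by
  have hstep : ∀ᶠ t in 𝓝[>] (0 : ℝ), ∀ i, ‖(p i).2 - (x.2 + t • w)‖ < (p i).1 - x.1 := by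
    refine eventually_all.2 fun i ↦ ?_
    simp only [← sub_sub]
    rcases (hx i).lt_or_eq with hlt | heq
    · exact nhdsWithin_le_nhds <| ContinuousAt.eventually_lt (by fun_prop) continuousAt_const
        (by simpa using hlt)
    · exact heq ▸ eventually_norm_sub_smul_lt_norm (hw i heq)
  obtain ⟨t, ht⟩ := hstep.exists
  have hlift : ∀ᶠ s in 𝓝[>] x.1, ∀ i, s < (p i).1 - ‖(p i).2 - (x.2 + t • w)‖ :=
    nhdsWithin_le_nhds <| eventually_all.2 fun i ↦ eventually_lt_nhds (by linarith [ht i])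
  obtain ⟨s, hs, hxs⟩ := (hlift.and self_mem_nhdsWithin).exists
  exact ⟨(s, x.2 + t • w), fun i ↦ by dsimp only; linarith [hs i], hxs⟩

theorem PrimalFeasible.exists_dualFeasible_dualObj_eq {x : ℝ × EuclideanSpace ℝ (Fin d)}
    (hx : PrimalFeasible p x) (hopt : ∀ x', PrimalFeasible p x' → x'.1 ≤ x.1) :
    ∃ y, DualFeasible y ∧ DualObj p y = x.1 := by
  -- `u i` is the gradient of `‖(p i).2 - ·‖` at `x.2`, and `0` (as `0⁻¹ = 0`) where it has none
  set u : Fin m → EuclideanSpace ℝ (Fin d) := fun i ↦ ‖x.2 - (p i).2‖⁻¹ • (x.2 - (p i).2)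
  set active : Set (Fin m) := {i | ‖(p i).2 - x.2‖ = (p i).1 - x.1}
  have hgordan : ¬ ∃ w, ∀ i ∈ active, ⟪u i, w⟫ < 0 := by
    rintro ⟨w, hw⟩
    obtain ⟨x', hx', hlt⟩ := hx.exists_lt (w := w) fun i hi ↦ by
      have := neg_of_mul_neg_right (by simpa only [u, real_inner_smul_left] using hw i hi)
        (inv_nonneg.2 (norm_nonneg (x.2 - (p i).2)))
      rw [← neg_sub, inner_neg_left]
      linarith
    exact (hopt x' hx').not_gt hlt
  obtain ⟨μ, ⟨hμ₀, hμ₁⟩, hμs, hμu⟩ := exists_mem_stdSimplex_sum_smul_eq_zero active u hgordan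
  have hterm : ∀ i, (p i).1 * μ i + ⟪(p i).2, μ i • u i⟫ = μ i * x.1 + ⟪x.2, μ i • u i⟫ := by
    intro i
    have hslack : μ i * ((p i).1 - ‖x.2 - (p i).2‖) = μ i * x.1 := by
      by_cases hi : i ∈ active
      · rw [norm_sub_rev, hi]; ring
      · rw [hμs i hi, zero_mul, zero_mul]
    have hinner : ⟪(p i).2, u i⟫ = ⟪x.2, u i⟫ - ‖x.2 - (p i).2‖ := by
      rw [← real_inner_inv_norm_smul_self (x.2 - (p i).2), ← inner_sub_left, sub_sub_cancel]
    rw [real_inner_smul_right _ (u i), real_inner_smul_right _ (u i), hinner]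
    linear_combination hslack
  refine ⟨fun i ↦ (μ i, μ i • u i), ⟨hμ₁, hμu, fun i ↦ ?_⟩, ?_⟩
  · rw [norm_smul, Real.norm_of_nonneg (hμ₀ i)]
    exact mul_le_of_le_one_right (hμ₀ i) (norm_inv_norm_smul_le_one _)
  · calc DualObj p (fun i ↦ (μ i, μ i • u i)) = ∑ i, (μ i * x.1 + ⟪x.2, μ i • u i⟫) :=
          Finset.sum_congr rfl fun i _ ↦ hterm i
      _ = x.1 := by
        rw [Finset.sum_add_distrib, ← Finset.sum_mul, ← inner_sum, hμ₁, hμu, inner_zero_right,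
          one_mul, add_zero]

end Duality

theorem stmt_5_general (d m : ℕ) (hm : 1 ≤ m)
    (p : Fin m → ℝ × EuclideanSpace ℝ (Fin d)) :
    ∃ (xs : ℝ × EuclideanSpace ℝ (Fin d)) (ys : Fin m → ℝ × EuclideanSpace ℝ (Fin d)),
      PrimalFeasible p xs ∧ DualFeasible ys ∧ xs.1 = DualObj p ys ∧
      (∀ x, PrimalFeasible p x → ∀ y, DualFeasible y → x.1 ≤ DualObj p y) ∧
      (∀ x, PrimalFeasible p x → x.1 ≤ xs.1) ∧
      (∀ y, DualFeasible y → DualObj p ys ≤ DualObj p y) := by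
  obtain ⟨xs, hxs, hopt⟩ := exists_primalFeasible_forall_le hm p
  obtain ⟨ys, hys, hobj⟩ := hxs.exists_dualFeasible_dualObj_eq hopt
  exact ⟨xs, ys, hxs, hys, hobj.symm, fun x hx y hy ↦ hx.le_dualObj hy, hopt,
    fun y hy ↦ hobj ▸ hxs.le_dualObj hy⟩

/-- Strong duality for `Inf_Q(P)`: there exist a primal feasible `x*` and a dual feasible
`y*` with equal objective values, weak duality holds, and consequently `x*` is primal
optimal and `y*` is dual optimal. -/
theorem stmt_5 (d m : ℕ) (hd : 1 ≤ d) (hm : 1 ≤ m)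
    (p : Fin m → ℝ × EuclideanSpace ℝ (Fin d)) :
    ∃ (xs : ℝ × EuclideanSpace ℝ (Fin d)) (ys : Fin m → ℝ × EuclideanSpace ℝ (Fin d)),
      PrimalFeasible p xs ∧ DualFeasible ys ∧ xs.1 = DualObj p ys ∧
      (∀ x, PrimalFeasible p x → ∀ y, DualFeasible y → x.1 ≤ DualObj p y) ∧
      (∀ x, PrimalFeasible p x → x.1 ≤ xs.1) ∧
      (∀ y, DualFeasible y → DualObj p ys ≤ DualObj p y) :=
  stmt_5_general d m hm p
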